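/- arXiv:2109.01473 — 3 statements merged into one kernel-verified Lean document; each statement's English description precedes it below -/
import Mathlib

section
/- For all natural numbers a and b, the product of falling factorial powers satisfies x^(falling a) * x^(falling b) = sum over k from 0 to min(a,b) of (a choose k)*(b choose k)*k! * x^(falling (a+b-k)), as an identity of polynomials in Q[x]. -/
open Polynomial

private lemma ff_key (a b k : ℕ) (hk : k ≤ a) :
    ((a.choose (k+1) * b.choose (k+1) * (k+1).factorial : ℕ) : ℚ[X]) +
      ((a - k : ℕ) : ℚ[X]) * ((a.choose k * b.choose k * k.factorial : ℕ) : ℚ[X]) =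
      ((a.choose (k+1) * (b+1).choose (k+1) * (k+1).factorial : ℕ) : ℚ[X]) := by
  have h : (a.choose (k+1) * (k+1) : ℕ) = a.choose k * (a - k) := Nat.choose_succ_right_eq a k
  have h' : ((a.choose (k+1) : ℕ) : ℚ[X]) * ((k : ℚ[X]) + 1) =
      ((a.choose k : ℕ) : ℚ[X]) * ((a : ℚ[X]) - (k : ℚ[X])) := by
    have h2 := congrArg (Nat.cast (R := ℚ[X])) h
    push_cast [Nat.cast_sub hk] at h2
    exact h2
  push_cast [Nat.choose_succ_succ, Nat.factorial_succ, Nat.cast_sub hk]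
  linear_combination (-((b.choose k : ℚ[X]) * (k.factorial : ℚ[X]))) * h'

private lemma ff_step (a b k : ℕ) (hk : k ≤ a) :
    descPochhammer ℚ (a+b-k) * (X - (b : ℚ[X])) =
      descPochhammer ℚ (a+b+1-k) + ((a-k : ℕ) : ℚ[X]) * descPochhammer ℚ (a+b-k) := by
  have h2 : a+b+1-k = (a+b-k)+1 := by omega
  rw [h2, descPochhammer_succ_right]
  have h3 : ((a+b-k : ℕ) : ℚ[X]) = ((a-k : ℕ) : ℚ[X]) + (b : ℚ[X]) := by
    have : a+b-k = (a-k)+b := by omega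
    rw [this]; push_cast; ring
  rw [h3]; ring

/-- **Product formula for falling factorial powers.**
`x^(falling a) * x^(falling b) = ∑_{k=0}^{min(a,b)} (a choose k)(b choose k) k! x^(falling (a+b-k))`
as polynomials in `ℚ[X]`, where `descPochhammer ℚ k = ∏_{i=0}^{k-1} (X - i)`. -/
theorem falling_factorial_mul (a b : ℕ) :
    descPochhammer ℚ a * descPochhammer ℚ b =
      ∑ k ∈ Finset.range (min a b + 1),
        ((a.choose k * b.choose k * k.factorial : ℕ) : ℚ[X]) *
          descPochhammer ℚ (a + b - k) := by
  induction b with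
  | zero => simp
  | succ b ih =>
    set m := min a b with hm
    have hma : m ≤ a := min_le_left a b
    have hmb : m ≤ b := min_le_right a b
    rw [descPochhammer_succ_right, ← mul_assoc, ih, Finset.sum_mul]
    have step1 : ∀ k ∈ Finset.range (m+1),
        ((a.choose k * b.choose k * k.factorial : ℕ) : ℚ[X]) * descPochhammer ℚ (a + b - k)
            * (X - (b : ℚ[X])) =
          ((a.choose k * b.choose k * k.factorial : ℕ) : ℚ[X]) * descPochhammer ℚ (a+b+1-k)
          + ((a-k : ℕ) : ℚ[X]) * ((a.choose k * b.choose k * k.factorial : ℕ) : ℚ[X])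
              * descPochhammer ℚ (a+b-k) := by
      intro k hk
      rw [Finset.mem_range] at hk
      have hka : k ≤ a := by omega
      rw [mul_assoc, ff_step a b k hka]
      ring
    rw [Finset.sum_congr rfl step1, Finset.sum_add_distrib]
    -- reindex first sum
    have e1 : ∑ k ∈ Finset.range (m+1),
        ((a.choose k * b.choose k * k.factorial : ℕ) : ℚ[X]) * descPochhammer ℚ (a+b+1-k)
        = descPochhammer ℚ (a+b+1) +
          ∑ k ∈ Finset.range (m+1),
            ((a.choose (k+1) * b.choose (k+1) * (k+1).factorial : ℕ) : ℚ[X])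
              * descPochhammer ℚ (a+b-k) := by
      rw [Finset.sum_range_succ'
        (fun k => ((a.choose k * b.choose k * k.factorial : ℕ) : ℚ[X])
          * descPochhammer ℚ (a+b+1-k)) m]
      have hz : ((a.choose (m+1) * b.choose (m+1) * (m+1).factorial : ℕ) : ℚ[X]) = 0 := by
        have hz0 : a.choose (m+1) * b.choose (m+1) = 0 := by
          rcases le_total a b with h1 | h1
          · rw [Nat.choose_eq_zero_of_lt (show a < m+1 by omega)]; ring
          · rw [Nat.choose_eq_zero_of_lt (show b < m+1 by omega), mul_zero]
        rw [hz0, zero_mul, Nat.cast_zero]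
      rw [Finset.sum_range_succ _ m]
      have hre : ∀ k, a+b+1-(k+1) = a+b-k := fun k => by omega
      simp only [hre, hz, zero_mul, add_zero, Nat.choose_zero_right, Nat.factorial_zero]
      push_cast
      ring
    rw [e1, add_assoc, ← Finset.sum_add_distrib]
    have e2 : ∑ k ∈ Finset.range (m+1),
        (((a.choose (k+1) * b.choose (k+1) * (k+1).factorial : ℕ) : ℚ[X])
            * descPochhammer ℚ (a+b-k)
          + ((a-k : ℕ) : ℚ[X]) * ((a.choose k * b.choose k * k.factorial : ℕ) : ℚ[X])
            * descPochhammer ℚ (a+b-k))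
        = ∑ k ∈ Finset.range (m+1),
            ((a.choose (k+1) * (b+1).choose (k+1) * (k+1).factorial : ℕ) : ℚ[X])
              * descPochhammer ℚ (a+b-k) := by
      refine Finset.sum_congr rfl fun k hk => ?_
      rw [Finset.mem_range] at hk
      have hka : k ≤ a := by omega
      rw [← ff_key a b k hka]; ring
    rw [e2]
    -- reassemble into a sum over range (m+2)
    have e3 : descPochhammer ℚ (a+b+1) +
        ∑ k ∈ Finset.range (m+1),
          ((a.choose (k+1) * (b+1).choose (k+1) * (k+1).factorial : ℕ) : ℚ[X])
            * descPochhammer ℚ (a+b-k)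
        = ∑ k ∈ Finset.range (m+2),
            ((a.choose k * (b+1).choose k * k.factorial : ℕ) : ℚ[X])
              * descPochhammer ℚ (a+b+1-k) := by
      rw [Finset.sum_range_succ'
        (fun k => ((a.choose k * (b+1).choose k * k.factorial : ℕ) : ℚ[X])
          * descPochhammer ℚ (a+b+1-k)) (m+1)]
      have hre : ∀ k, a+b+1-(k+1) = a+b-k := fun k => by omega
      simp only [hre, Nat.choose_zero_right, Nat.factorial_zero, Nat.sub_zero]
      push_cast
      ring
    rw [e3]
    -- shrink range
    have hsub : Finset.range (min a (b+1) + 1) ⊆ Finset.range (m+2) := by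
      apply Finset.range_subset_range.2; omega
    rw [← Finset.sum_subset hsub]
    · refine Finset.sum_congr rfl fun k _ => ?_
      congr 2
    · intro k hk hk'
      rw [Finset.mem_range] at hk
      rw [Finset.mem_range, not_lt] at hk'
      have hz0 : a.choose k * (b+1).choose k = 0 := by
        rcases Nat.lt_or_ge a k with h1 | h1
        · rw [Nat.choose_eq_zero_of_lt h1]; ring
        · rw [Nat.choose_eq_zero_of_lt (show b+1 < k by omega), mul_zero]
      rw [hz0, zero_mul, Nat.cast_zero, zero_mul]
end

section
/- In the rational group algebra of the symmetric group S_{n+1}, let x_j denote the sum of all minimal-length left coset representatives of the Young subgroup S_{j+1} x S_1^{n-j} (the stabilizer of the points j+2,...,n+1 that is the parabolic subgroup generated by the adjacent transpositions s_1,...,s_j). Then for 0 <= k < n, x_{n-1} * x_{n-k} = k * x_{n-k} + x_{n-k-1}. -/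
/-- In the group algebra `ℚ[S_N]` (permutations of `{0, 1, ..., N-1}`, corresponding to
`{1, ..., N}` in one-based indexing), `xA N j` is the sum of all permutations `w` with
`w 0 < w 1 < ... < w j`, i.e. the minimal-length left coset representatives of the
parabolic (Young) subgroup generated by the adjacent transpositions `s_1, ..., s_j`,
which is the stabilizer of the points `j+2, ..., N` (one-based). -/
noncomputable def xA (N j : ℕ) : MonoidAlgebra ℚ (Equiv.Perm (Fin N)) :=
  ∑ w ∈ Finset.univ.filter
      (fun w : Equiv.Perm (Fin N) => ∀ a b : Fin N, a < b → (b : ℕ) ≤ j → w a < w b),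
    MonoidAlgebra.single w 1

/-!
The permutations `u` with `u 0 < ⋯ < u (n-1)` are the cycles `c m = (m m+1 ⋯ n)`, one for each
value `m = u n`. Hence the coefficient of `w` in `x_{n-1} * x_p` is the number of `m` with
`c m⁻¹ * w ∈ X_p`. As `c m⁻¹` sends `m` to the top and is increasing elsewhere, this holds for
`m ∉ w {0, …, p}` exactly when `w ∈ X_p`, and for `m = w i` with `i ≤ p` exactly when `i = p` and
`w ∈ X_{p-1}`. So the coefficient is `(n - p) [w ∈ X_p] + [w ∈ X_{p-1}]`.
-/

open Finset Equiv MonoidAlgebra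

theorem MonoidAlgebra.sum_single_mul_sum_single {R G : Type*} [CommSemiring R] [Group G]
    [Fintype G] (f g : G → R) :
    (∑ u, single u (f u)) * (∑ v, single v (g v)) =
      ∑ w, single w (∑ u, f u * g (u⁻¹ * w)) := by
  simp only [Finset.sum_mul_sum, single_mul_single]
  calc ∑ u, ∑ v, single (u * v) (f u * g v)
      = ∑ u, ∑ w, single w (f u * g (u⁻¹ * w)) := by
        refine Finset.sum_congr rfl fun u _ => ?_
        exact Fintype.sum_equiv (Equiv.mulLeft u) _ _ fun v => by simp
    _ = ∑ w, single w (∑ u, f u * g (u⁻¹ * w)) := by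
        rw [Finset.sum_comm]
        exact Finset.sum_congr rfl fun w _ => (map_sum (singleAddHom w) _ _).symm

theorem StrictMonoOn.comp_iff {α β γ : Type*} [Preorder α] [LinearOrder β] [Preorder γ]
    {f : α → β} {g : β → γ} {s : Set α} {t : Set β} (hg : StrictMonoOn g t)
    (hf : Set.MapsTo f s t) : StrictMonoOn (g ∘ f) s ↔ StrictMonoOn f s := by
  refine ⟨fun hgf a ha b hb hab => ?_, fun h => hg.comp h hf⟩
  by_contra hle
  exact (hgf ha hb hab).not_ge (hg.monotoneOn (hf hb) (hf ha) (not_lt.1 hle))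

theorem StrictMonoOn.perm_inv {α : Type*} [LinearOrder α] {c : Perm α} {s : Set α}
    (hc : StrictMonoOn c s) : StrictMonoOn ⇑c⁻¹ (c '' s) := by
  rintro _ ⟨a, ha, rfl⟩ _ ⟨b, hb, rfl⟩ hab
  simpa using (hc.lt_iff_lt ha hb).1 hab

theorem Fin.strictMonoOn_setOf_val_le_pred_iff {N : ℕ} {α : Type*} [Preorder α] (f : Fin N → α)
    (p : Fin N) : StrictMonoOn f {a | (a : ℕ) ≤ p - 1} ↔ StrictMonoOn f (Set.Iio p) := by
  rcases Nat.eq_zero_or_pos (p : ℕ) with hp | hp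
  · have hsub : ∀ s : Set (Fin N), s ⊆ {a | (a : ℕ) = 0} → s.Subsingleton := fun s hs a ha b hb =>
      Fin.ext ((hs ha).trans (hs hb).symm)
    refine iff_of_true ((hsub _ fun a ha => ?_).strictMonoOn f)
      ((hsub _ fun a ha => ?_).strictMonoOn f)
    · change (a : ℕ) ≤ p - 1 at ha; change (a : ℕ) = 0; omega
    · change (a : ℕ) < p at ha; change (a : ℕ) = 0; omega
  · congr!
    ext a
    simp only [Set.mem_Iio, Fin.lt_def]
    change (a : ℕ) ≤ p - 1 ↔ _
    omega

theorem xA_eq_sum_single (N j : ℕ) :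
    xA N j = ∑ w : Perm (Fin N),
      single w (if StrictMonoOn w {a : Fin N | (a : ℕ) ≤ j} then (1 : ℚ) else 0) := by
  simp only [xA, Finset.sum_filter, apply_ite (single _), single_zero]
  refine Finset.sum_congr rfl fun w _ => if_congr ?_ rfl rfl
  exact ⟨fun h a _ b hb hab => h a b hab hb,
    fun h a b hab hb => h ((Fin.lt_def.1 hab).le.trans hb) hb hab⟩

namespace Fin

variable {n : ℕ}

theorem cycleIcc_last_apply_castSucc (m : Fin (n + 1)) (x : Fin n) :
    cycleIcc m (last n) x.castSucc = m.succAbove x := by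
  simpa using congrFun (cycleIcc_comp_succAbove m (last n) m.le_last) x

theorem cycleIcc_last_apply_last (m : Fin (n + 1)) : cycleIcc m (last n) (last n) = m :=
  cycleIcc_of_last m.le_last

theorem strictMonoOn_Iio_last_iff {α : Type*} [Preorder α] (f : Fin (n + 1) → α) :
    StrictMonoOn f (Set.Iio (last n)) ↔ StrictMono (f ∘ castSucc) := by
  refine ⟨fun h a b hab =>
    h (castSucc_lt_last a) (castSucc_lt_last b) (castSucc_lt_castSucc_iff.2 hab),
    fun h a ha b hb hab => ?_⟩
  obtain ⟨a, rfl⟩ : ∃ a', castSucc a' = a := ⟨_, castSucc_castPred a ha.ne⟩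
  obtain ⟨b, rfl⟩ : ∃ b', castSucc b' = b := ⟨_, castSucc_castPred b hb.ne⟩
  exact h (castSucc_lt_castSucc_iff.1 hab)

theorem strictMonoOn_Iio_last_iff_eq_cycleIcc (u : Perm (Fin (n + 1))) :
    StrictMonoOn u (Set.Iio (last n)) ↔ u = cycleIcc (u (last n)) (last n) := by
  rw [strictMonoOn_Iio_last_iff]
  refine ⟨fun h => ?_, fun h => ?_⟩
  · have hrange : Set.range (u ∘ castSucc) = Set.range (u (last n)).succAbove := by
      rw [← succAbove_last, Set.range_comp, range_succAbove, range_succAbove,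
        Set.image_compl_eq u.bijective, Set.image_singleton]
    have hsucc := (h.range_inj (strictMono_succAbove _)).1 hrange
    ext x : 1
    induction x using lastCases with
    | last => rw [cycleIcc_last_apply_last]
    | cast x => rw [cycleIcc_last_apply_castSucc, ← hsucc, Function.comp_apply]
  · rw [h]
    convert strictMono_succAbove (u (last n)) using 1
    ext x : 1
    exact cycleIcc_last_apply_castSucc _ x

theorem sum_filter_strictMonoOn_Iio_last {M : Type*} [AddCommMonoid M]
    (F : Perm (Fin (n + 1)) → M) :
    ∑ u ∈ univ.filter fun u : Perm (Fin (n + 1)) => StrictMonoOn u (Set.Iio (last n)), F u =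
      ∑ m, F (cycleIcc m (last n)) := by
  symm
  refine Finset.sum_nbij' (fun m => cycleIcc m (last n)) (fun u => u (last n)) ?_ ?_ ?_ ?_ ?_
  · intro m _
    simp only [Finset.mem_filter, Finset.mem_univ, true_and]
    rw [strictMonoOn_Iio_last_iff_eq_cycleIcc, cycleIcc_last_apply_last]
  · exact fun _ _ => Finset.mem_univ _
  · exact fun m _ => cycleIcc_last_apply_last m
  · intro u hu
    exact ((strictMonoOn_Iio_last_iff_eq_cycleIcc u).1 (by simpa using hu)).symm
  · exact fun _ _ => rfl

theorem cycleIcc_last_inv_apply_self (m : Fin (n + 1)) : (cycleIcc m (last n))⁻¹ m = last n :=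
  Perm.inv_eq_iff_eq.2 (cycleIcc_last_apply_last m).symm

theorem strictMonoOn_cycleIcc_last_inv (m : Fin (n + 1)) :
    StrictMonoOn ⇑(cycleIcc m (last n))⁻¹ {m}ᶜ := by
  have hmono : StrictMonoOn (cycleIcc m (last n)) {last n}ᶜ := by
    rw [← top_eq_last, ← Set.Iio_top, top_eq_last, strictMonoOn_Iio_last_iff_eq_cycleIcc,
      cycleIcc_last_apply_last]
  simpa [Set.image_compl_eq (Equiv.bijective _), cycleIcc_last_apply_last] using hmono.perm_inv

end Fin

section LinearOrder

variable {α : Type*} [LinearOrder α]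

theorem strictMonoOn_perm_mul_iff_of_notMem {d w : Perm α} {m : α} {s : Set α}
    (hd : StrictMonoOn d {m}ᶜ) (hm : m ∉ w '' s) :
    StrictMonoOn ⇑(d * w) s ↔ StrictMonoOn w s :=
  hd.comp_iff fun a ha h => hm ⟨a, ha, h⟩

theorem strictMonoOn_perm_mul_Iic_iff_of_apply_eq [OrderTop α] {d w : Perm α} {m i p : α}
    (hdm : d m = ⊤) (hd : StrictMonoOn d {m}ᶜ) (hip : i ≤ p) (hwi : w i = m) :
    StrictMonoOn ⇑(d * w) (Set.Iic p) ↔ i = p ∧ StrictMonoOn w (Set.Iio p) := by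
  have hmaps : ∀ {a}, a ≠ i → w a ≠ m := fun ha h => ha (w.injective (h.trans hwi.symm))
  constructor
  · intro h
    have hpi : i = p := by
      refine hip.eq_of_not_lt fun hlt => ?_
      have := h hip le_rfl hlt
      rw [Perm.mul_apply, hwi, hdm] at this
      exact not_top_lt this
    subst hpi
    refine ⟨rfl, (strictMonoOn_perm_mul_iff_of_notMem hd ?_).1 (h.mono Set.Iio_subset_Iic_self)⟩
    rintro ⟨a, ha, h⟩
    exact hmaps (ne_of_lt ha) h
  · rintro ⟨rfl, h⟩ a ha b hb hab
    rcases (Set.mem_Iic.1 hb).lt_or_eq with hb | rfl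
    · exact ((strictMonoOn_perm_mul_iff_of_notMem hd fun ⟨c, hc, h⟩ => hmaps (ne_of_lt hc) h).2 h)
        (hab.trans hb) hb hab
    · rw [Perm.mul_apply, Perm.mul_apply, hwi, hdm, lt_top_iff_ne_top, ← hdm]
      exact d.injective.ne (hmaps (ne_of_lt hab))

theorem card_filter_strictMonoOn_perm_mul_Iic [OrderTop α] [Fintype α] [LocallyFiniteOrderBot α]
    (d : α → Perm α) (hdm : ∀ m, d m m = ⊤)
    (hd : ∀ m, StrictMonoOn (d m) {m}ᶜ) (w : Perm α) (p : α) :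
    #{m | StrictMonoOn ⇑(d m * w) (Set.Iic p)} =
      #(Finset.Iic p)ᶜ * (if StrictMonoOn w (Set.Iic p) then 1 else 0) +
        (if StrictMonoOn w (Set.Iio p) then 1 else 0) := by
  rw [Finset.card_filter, ← Finset.sum_compl_add_sum ((Finset.Iic p).image w)]
  congr 1
  · have hnot : ∀ m ∈ ((Finset.Iic p).image w)ᶜ, m ∉ w '' Set.Iic p := fun m hm ⟨a, ha, h⟩ =>
      Finset.mem_compl.1 hm (Finset.mem_image.2 ⟨a, Finset.mem_Iic.2 ha, h⟩)
    rw [Finset.sum_congr rfl fun m hm =>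
        if_congr (strictMonoOn_perm_mul_iff_of_notMem (hd m) (hnot m hm)) rfl rfl,
      Finset.sum_const, smul_eq_mul, Finset.card_compl, Finset.card_compl,
      Finset.card_image_of_injective _ w.injective]
  · rw [Finset.sum_image w.injective.injOn, Finset.sum_congr rfl fun i hi => if_congr
        (strictMonoOn_perm_mul_Iic_iff_of_apply_eq (hdm _) (hd _) (Finset.mem_Iic.1 hi) rfl)
        rfl rfl]
    simp only [ite_and]
    rw [Finset.sum_ite_eq', if_pos (Finset.mem_Iic.2 le_rfl)]

end LinearOrder

theorem xA_eq_sum_single_Iic {N : ℕ} (p : Fin N) :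
    xA N p = ∑ w : Perm (Fin N), single w (if StrictMonoOn w (Set.Iic p) then (1 : ℚ) else 0) :=
  xA_eq_sum_single N p

theorem xA_eq_sum_single_Iio {N : ℕ} (p : Fin N) :
    xA N (p - 1) =
      ∑ w : Perm (Fin N), single w (if StrictMonoOn w (Set.Iio p) then (1 : ℚ) else 0) := by
  simp only [xA_eq_sum_single, Fin.strictMonoOn_setOf_val_le_pred_iff]

theorem Fin.card_filter_strictMonoOn_cycleIcc_last_inv_mul {n : ℕ} (w : Perm (Fin (n + 1)))
    (p : Fin (n + 1)) :
    #{m | StrictMonoOn ⇑((cycleIcc m (last n))⁻¹ * w) (Set.Iic p)} =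
      (n - p) * (if StrictMonoOn w (Set.Iic p) then 1 else 0) +
        (if StrictMonoOn w (Set.Iio p) then 1 else 0) := by
  have hcount := card_filter_strictMonoOn_perm_mul_Iic _
    (fun m => (cycleIcc_last_inv_apply_self m).trans (top_eq_last n).symm)
    strictMonoOn_cycleIcc_last_inv w p
  rw [card_compl, card_Iic, Fintype.card_fin, Nat.add_sub_add_right] at hcount
  -- `hcount` carries other, equal, `Decidable` instances
  convert hcount using 4

theorem xA_sub_one_mul_xA (n : ℕ) (p : Fin (n + 1)) :
    xA (n + 1) (n - 1) * xA (n + 1) p = ((n - p : ℕ) : ℚ) • xA (n + 1) p + xA (n + 1) (p - 1) := by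
  rw [show n - 1 = (Fin.last n : ℕ) - 1 from rfl, xA_eq_sum_single_Iio, xA_eq_sum_single_Iic,
    xA_eq_sum_single_Iio, sum_single_mul_sum_single, Finset.smul_sum, ← Finset.sum_add_distrib]
  refine Finset.sum_congr rfl fun w _ => ?_
  rw [smul_single', ← single_add]
  congr 1
  simp only [boole_mul]
  rw [← Finset.sum_filter, Fin.sum_filter_strictMonoOn_Iio_last, ← Finset.natCast_card_filter,
    Fin.card_filter_strictMonoOn_cycleIcc_last_inv_mul]
  push_cast
  rfl

/-- In `ℚ[S_{n+1}]`, for `0 ≤ k < n`: `x_{n-1} * x_{n-k} = k • x_{n-k} + x_{n-k-1}`. -/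
theorem xA_mul (n k : ℕ) (hk : k < n) :
    xA (n + 1) (n - 1) * xA (n + 1) (n - k) =
      (k : ℚ) • xA (n + 1) (n - k) + xA (n + 1) (n - k - 1) := by
  have h := xA_sub_one_mul_xA n ⟨n - k, by omega⟩
  rwa [Fin.val_mk, Nat.sub_sub_self hk.le] at h
end

section
/- Let m = 2k + l with k >= 1 and l in {1,2}, and let W be the dihedral Coxeter group I_2(m) with generators s_1, s_2. Let x_J be the sum in Q[W] of the minimal-length left coset representatives of the subgroup generated by s_2, and x_∅ the sum of all elements of W. Then x_J^2 = l*x_J + k*x_∅, and consequently x_∅ = (-l/k)*x_J + (1/k)*x_J^2 lies in Q[x_J]; the set {1, x_J, x_∅} is a basis of Q[x_J] contained in the standard descent algebra basis. -/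
open scoped Classical

set_option synthInstance.maxHeartbeats 1000000
set_option maxHeartbeats 1000000

/-- For a finite Coxeter system `cs` and a set `J` of simple indices, `xCox cs J` is the
sum, in the group algebra `ℚ[W]`, of the minimal-length left coset representatives of the
standard parabolic subgroup `W_J`, namely the `w ∈ W` with `ℓ(w s) > ℓ(w)` for all
simple reflections `s` indexed by `J`.  In particular `xCox cs ∅` is the sum of all
elements of `W`. -/
noncomputable def xCox {B W : Type*} [Group W] [Fintype W] {M : CoxeterMatrix B}
    (cs : CoxeterSystem M W) (J : Set B) : MonoidAlgebra ℚ W :=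
  ∑ w ∈ Finset.univ.filter
      (fun w : W => ∀ t ∈ J, cs.length w < cs.length (w * cs.simple t)),
    MonoidAlgebra.single w 1

/-!
Write `a n` for the product of the alternating word of length `n` ending in `s 0`. Every `w` is
the product of one of the two alternating words of length `ℓ w`, since a reduced word has no two
equal adjacent letters. Letting `s 0` and `s 1` act on the `2 m` chambers `ZMod (2 m)` by the
reflections `x ↦ 1 - x` and `x ↦ -1 - x` sends `w` to the chamber `±ℓ w`, which separates the
alternating words of length at most `m`. Hence these words are reduced, `X_J = {a n | n < m}` and
`W = {a n | n < 2 m}`.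

With `q = s 1 * s 0` we have `a (2 c) = q ^ c` and `a (2 c + 1) = s 0 * q ^ c`, so
`x_J = A + s 0 * B` and `x_∅ = S + s 0 * S` for geometric sums `A`, `B`, `S` in `q`. Since `s 0`
inverts `q`, squaring `x_J` reduces to two identities between geometric sums in the commutative
ring generated by `q`, where `q ^ m = 1`. Finally `x_J x_∅` is a multiple of `x_∅`, so
`span {1, x_J, x_∅}` is stable under multiplication by `x_J` and is therefore `ℚ[x_J]`; the
coefficients at `1`, `s 0` and `s 1` show that `1, x_J, x_∅` are linearly independent.
-/

open CoxeterSystem Finset MonoidAlgebra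

theorem ZMod.natCast_injOn_range (N : ℕ) : Set.InjOn (Nat.cast : ℕ → ZMod N) (range N) := by
  intro a ha b hb h
  simp only [coe_range, Set.mem_Iio] at ha hb
  rwa [ZMod.natCast_eq_natCast_iff', Nat.mod_eq_of_lt ha, Nat.mod_eq_of_lt hb] at h

theorem ZMod.eq_of_natCast_eq_or_eq_neg {m a b : ℕ} (ha : a ≤ m) (hb : b ≤ m)
    (h : (a : ZMod (2 * m)) = b ∨ (a : ZMod (2 * m)) = -b) : a = b := by
  rcases h with h | h
  · rcases Nat.eq_zero_or_pos m with rfl | hm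
    · omega
    · exact natCast_injOn_range (2 * m) (by simp; omega) (by simp; omega) h
  · obtain ⟨c, hc⟩ : 2 * m ∣ a + b := by
      rw [← ZMod.natCast_eq_zero_iff, Nat.cast_add, h, neg_add_cancel]
    rcases c with _ | _ | c <;> nlinarith

theorem Finset.sum_range_eq_sum_even_add_sum_odd {M : Type*} [AddCommMonoid M] (f : ℕ → M)
    (N : ℕ) :
    ∑ n ∈ range N, f n =
      ∑ c ∈ range ((N + 1) / 2), f (2 * c) + ∑ c ∈ range (N / 2), f (2 * c + 1) := by
  induction N with
  | zero => simp
  | succ N ih =>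
    rw [sum_range_succ, ih]
    obtain ⟨c, rfl | rfl⟩ := Nat.even_or_odd' N
    · rw [show (2 * c + 1 + 1) / 2 = c + 1 by omega, show (2 * c + 1) / 2 = c by omega,
        show 2 * c / 2 = c by omega, sum_range_succ (fun c => f (2 * c))]
      abel
    · rw [show (2 * c + 1 + 1 + 1) / 2 = c + 1 by omega,
        show (2 * c + 1 + 1) / 2 = c + 1 by omega, show (2 * c + 1) / 2 = c by omega,
        sum_range_succ (fun c => f (2 * c + 1))]
      abel

theorem add_mul_mul_add_mul_eq {R : Type*} [Semiring R] {a b t y₁ y₂ : R}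
    (ha : a * t = t * (y₁ * a)) (hb : b * t = t * (y₂ * b)) (ht : t * t = 1)
    (hab : Commute a b) :
    (a + t * b) * (a + t * b) = (a * a + y₂ * (b * b)) + t * (y₁ * (a * b) + a * b) := by
  have htbt : t * b * (t * b) = y₂ * (b * b) := by
    rw [mul_assoc, ← mul_assoc b, hb, ← mul_assoc, ← mul_assoc, ht, one_mul, mul_assoc]
  rw [add_mul, mul_add, mul_add, htbt, ← mul_assoc a, ha, mul_assoc t b a, ← hab.eq]
  simp only [mul_add, mul_assoc]
  abel

section GeomSum

variable {R : Type*} [CommRing R] {z : R}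

theorem pow_mul_geom_sum_of_pow_eq_one {n : ℕ} (hz : z ^ n = 1) (j : ℕ) :
    z ^ j * ∑ c ∈ range n, z ^ c = ∑ c ∈ range n, z ^ c := by
  have hz1 : z * ∑ c ∈ range n, z ^ c = ∑ c ∈ range n, z ^ c := by
    have := (geom_sum_succ (x := z) (n := n)).symm.trans geom_sum_succ'
    rw [hz] at this
    linear_combination this
  induction j with
  | zero => simp
  | succ j ih => rw [pow_succ, mul_assoc, hz1, ih]

theorem geom_sum_mul_geom_sum_of_pow_eq_one {n : ℕ} (hz : z ^ n = 1) (a : ℕ) :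
    (∑ c ∈ range a, z ^ c) * ∑ c ∈ range n, z ^ c = a • ∑ c ∈ range n, z ^ c := by
  simp [sum_mul, pow_mul_geom_sum_of_pow_eq_one hz]

theorem geom_sum_add (a b : ℕ) :
    ∑ c ∈ range (a + b), z ^ c =
      ∑ c ∈ range a, z ^ c + z ^ a * ∑ c ∈ range b, z ^ c := by
  simp [sum_range_add, pow_add, mul_sum]

theorem geom_sum_dihedral_identities {k l : ℕ} (hl : l = 1 ∨ l = 2)
    (hz : z ^ (2 * k + l) = 1) :
    (∑ c ∈ range (k + 1), z ^ c) * ∑ c ∈ range (k + 1), z ^ c +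
        z ^ (k + 2) * ((∑ c ∈ range (k + l - 1), z ^ c) * ∑ c ∈ range (k + l - 1), z ^ c) =
      l • ∑ c ∈ range (k + 1), z ^ c + k • ∑ c ∈ range (2 * k + l), z ^ c ∧
    z ^ (k + l) * ((∑ c ∈ range (k + 1), z ^ c) * ∑ c ∈ range (k + l - 1), z ^ c) +
        (∑ c ∈ range (k + 1), z ^ c) * ∑ c ∈ range (k + l - 1), z ^ c =
      l • ∑ c ∈ range (k + l - 1), z ^ c + k • ∑ c ∈ range (2 * k + l), z ^ c := by
  have hzS := pow_mul_geom_sum_of_pow_eq_one hz 1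
  rw [pow_one] at hzS
  rcases hl with rfl | rfl
  · simp only [Nat.add_sub_cancel]
    have hA : ∑ c ∈ range (k + 1), z ^ c = z * ∑ c ∈ range k, z ^ c + 1 := geom_sum_succ
    have hS := geom_sum_add (z := z) (k + 1) k
    have hBS := geom_sum_mul_geom_sum_of_pow_eq_one hz k
    have hS' := geom_sum_add (z := z) (k + 1) (k + 1)
    have hS'' : ∑ c ∈ range (2 * k + 1 + 1), z ^ c = z ^ (2 * k + 1) + _ := geom_sum_succ'
    rw [show k + 1 + k = 2 * k + 1 by ring] at hS
    rw [show k + 1 + (k + 1) = 2 * k + 1 + 1 by ring] at hS'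
    constructor
    · linear_combination (∑ c ∈ range (k + 1), z ^ c) * hA -
        z * (∑ c ∈ range k, z ^ c) * hS + z * hBS + k * hzS
    · linear_combination -(∑ c ∈ range k, z ^ c) * hS' + (∑ c ∈ range k, z ^ c) * hS'' +
        (∑ c ∈ range k, z ^ c) * hz + hBS
  · simp only [show k + 2 - 1 = k + 1 by omega]
    have hS := geom_sum_add (z := z) (k + 1) (k + 1)
    rw [show k + 1 + (k + 1) = 2 * k + 2 by ring] at hS
    have hgeo := mul_neg_geom_sum z (k + 1)
    have hAS := geom_sum_mul_geom_sum_of_pow_eq_one hz (k + 1)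
    have key : (∑ c ∈ range (k + 1), z ^ c) * ∑ c ∈ range (k + 1), z ^ c +
        z ^ (k + 2) * ((∑ c ∈ range (k + 1), z ^ c) * ∑ c ∈ range (k + 1), z ^ c) =
        2 • ∑ c ∈ range (k + 1), z ^ c + k • ∑ c ∈ range (2 * k + 2), z ^ c := by
      linear_combination (1 - z * ∑ c ∈ range (k + 1), z ^ c) * hS +
        (∑ c ∈ range (k + 1), z ^ c) * hgeo + (k + 1) * hzS + z * hAS
    exact ⟨key, by linear_combination key⟩

end GeomSum

theorem MonoidAlgebra.geom_sum_of_mul_of {k G : Type*} [Semiring k] [Group G] {q t : G} {m : ℕ}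
    (hq : q ^ m = 1) (hqt : q * t = t * q⁻¹) {N e : ℕ} (hNe : N - 1 + e = m) :
    (∑ c ∈ range N, of k G q ^ c) * of k G t =
      of k G t * (of k G q ^ e * ∑ c ∈ range N, of k G q ^ c) := by
  have hpow (c : ℕ) (hc : c ≤ m) : q ^ c * t = t * q ^ (m - c) := by
    rw [pow_sub q hc, hq, one_mul, ← inv_pow]
    exact (SemiconjBy.pow_right hqt.symm c).symm
  calc (∑ c ∈ range N, of k G q ^ c) * of k G t
      = ∑ c ∈ range N, of k G t * of k G q ^ (e + (N - 1 - c)) := by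
        rw [sum_mul]
        refine sum_congr rfl fun c hc => ?_
        rw [mem_range] at hc
        rw [← map_pow, ← map_pow, ← map_mul, ← map_mul, hpow c (by omega),
          show m - c = e + (N - 1 - c) by omega]
    _ = of k G t * (of k G q ^ e * ∑ c ∈ range N, of k G q ^ (N - 1 - c)) := by
        simp only [mul_sum, pow_add]
    _ = _ := by rw [sum_range_reflect (fun c => of k G q ^ c)]

theorem Algebra.exists_basis_adjoin_singleton {K A ι : Type*} [CommRing K] [Ring A]
    [Algebra K A] {x : A} {v : ι → A} (hli : LinearIndependent K v)
    (hv : ∀ i, v i ∈ Algebra.adjoin K {x}) (h1 : 1 ∈ Submodule.span K (Set.range v))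
    (hx : ∀ i, x * v i ∈ Submodule.span K (Set.range v)) :
    ∃ b : Module.Basis ι K (Algebra.adjoin K {x}), ∀ i, (b i : A) = v i := by
  set V := Submodule.span K (Set.range v)
  have hxV : V ≤ V.comap (LinearMap.mulLeft K x) :=
    Submodule.span_le.mpr (Set.range_subset_iff.mpr hx)
  have hpow (n : ℕ) : x ^ n ∈ V := by
    induction n with
    | zero => simpa using h1
    | succ n ih => rw [pow_succ']; exact hxV ih
  have hV : Subalgebra.toSubmodule (Algebra.adjoin K {x}) = V := by
    refine le_antisymm ?_ (Submodule.span_le.mpr (Set.range_subset_iff.mpr hv))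
    rw [Algebra.adjoin_eq_span, Submodule.span_le]
    rintro _ hy
    obtain ⟨n, rfl⟩ := Submonoid.mem_closure_singleton.mp hy
    exact hpow n
  refine ⟨(Module.Basis.span hli).map
    ((LinearEquiv.ofEq _ _ hV.symm).trans (Subalgebra.toSubmoduleEquiv _)), fun i => ?_⟩
  simp only [Module.Basis.map_apply, Module.Basis.span_apply, LinearEquiv.trans_apply]
  rfl

section xCox

variable {B W : Type*} [Group W] [Fintype W] {M : CoxeterMatrix B} (cs : CoxeterSystem M W)

theorem xCox_coeff (J : Set B) (w : W) :
    (xCox cs J).coeff w =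
      if ∀ t ∈ J, cs.length w < cs.length (w * cs.simple t) then 1 else 0 := by
  simp [xCox, coeff_sum, coeff_single, Finsupp.single_apply]

theorem xCox_eq_sum_range {J : Set B} {f : ℕ → W} {N : ℕ} (hf : Set.InjOn f (range N))
    (hJ : ∀ w, (∀ t ∈ J, cs.length w < cs.length (w * cs.simple t)) ↔ ∃ n < N, f n = w) :
    xCox cs J = ∑ n ∈ range N, of ℚ W (f n) := by
  rw [xCox, ← sum_image hf]
  congr 1
  ext w
  simp [hJ]

theorem of_mul_xCox_empty (g : W) : of ℚ W g * xCox cs ∅ = xCox cs ∅ := by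
  have hE : xCox cs ∅ = ∑ w, of ℚ W w := by simp [xCox]
  simp only [hE, mul_sum, ← map_mul]
  exact Fintype.sum_bijective _ (Group.mulLeft_bijective g) _ _ fun _ => rfl

theorem xCox_mul_xCox_empty (J : Set B) :
    xCox cs J * xCox cs ∅ =
      #{w | ∀ t ∈ J, cs.length w < cs.length (w * cs.simple t)} • xCox cs ∅ := by
  conv_lhs => rw [xCox]
  simp [sum_mul, ← of_apply, of_mul_xCox_empty]

end xCox

/-- `s i` acts on the `2 * m` chambers `ZMod (2 * m)` of the dihedral arrangement as
`x ↦ wallOffset m i - x`, the reflection exchanging the chambers `0` and `wallOffset m i`. -/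
def wallOffset (m : ℕ) : Fin 2 → ZMod (2 * m) := ![1, -1]

theorem wallOffset_eq_neg {m : ℕ} {i j : Fin 2} (hij : i ≠ j) :
    wallOffset m i = -wallOffset m j := by
  fin_cases i <;> fin_cases j <;> simp_all [wallOffset]

theorem wallOffset_eq_one_or_neg_one (m : ℕ) (i : Fin 2) :
    wallOffset m i = 1 ∨ wallOffset m i = -1 := by
  fin_cases i <;> simp [wallOffset]

namespace CoxeterSystem

variable {W : Type*} [Group W] {M : CoxeterMatrix (Fin 2)} (cs : CoxeterSystem M W)

local prefix:100 "π" => cs.wordProd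
local prefix:100 "ℓ" => cs.length

theorem exists_eq_wordProd_alternatingWord (w : W) :
    ∃ i j : Fin 2, i ≠ j ∧ w = π (alternatingWord i j (ℓ w)) := by
  obtain ⟨n, hw⟩ : ∃ n, ℓ w = n := ⟨_, rfl⟩
  rw [hw]
  induction n generalizing w with
  | zero =>
    exact ⟨0, 1, by decide, by simp [cs.length_eq_zero_iff.mp hw, alternatingWord]⟩
  | succ n ih =>
    obtain ⟨k, hk⟩ := cs.exists_rightDescent_of_ne_one (w := w) (by rintro rfl; simp at hw)
    obtain ⟨i, j, hij, hwk⟩ :=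
      ih (w * cs.simple k) (by have := cs.isRightDescent_iff.mp hk; omega)
    have hw' : w = π (alternatingWord i j n) * cs.simple k := by
      rw [← hwk, simple_mul_simple_cancel_right]
    by_cases hki : k = i
    · exact ⟨j, i, hij.symm, by rw [hw', hki, alternatingWord_succ, wordProd_concat]⟩
    have hkj : k = j := by omega
    cases n with
    | zero => exact ⟨i, j, hij, by simp [hw', hkj, alternatingWord]⟩
    | succ n =>
      -- `s j` cancels the last letter of the word, which would make `w` too short
      have hle := cs.length_wordProd_le (alternatingWord j i n)
      rw [length_alternatingWord] at hle
      rw [alternatingWord_succ, wordProd_concat, hkj, simple_mul_simple_cancel_right] at hw'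
      rw [hw'] at hw
      omega

theorem sum_range_of_wordProd_alternatingWord (N : ℕ) :
    ∑ n ∈ range N, of ℚ W (π (alternatingWord 1 0 n)) =
      ∑ c ∈ range ((N + 1) / 2), of ℚ W (cs.simple 1 * cs.simple 0) ^ c +
        of ℚ W (cs.simple 0) *
          ∑ c ∈ range (N / 2), of ℚ W (cs.simple 1 * cs.simple 0) ^ c := by
  rw [sum_range_eq_sum_even_add_sum_odd, mul_sum]
  congr 1 <;> refine sum_congr rfl fun c _ => ?_ <;>
    simp [prod_alternatingWord_eq_mul_pow, Nat.mul_add_div]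

variable {m : ℕ} (hM : M 0 1 = m)
include hM

theorem coxeterMatrix_eq_of_ne {i j : Fin 2} (hij : i ≠ j) : M i j = m := by
  fin_cases i <;> fin_cases j <;> simp_all [M.symmetric 1 0]

theorem isLiftable_subLeft_wallOffset : M.IsLiftable fun i => Equiv.subLeft (wallOffset m i) := by
  intro i j
  have hpow (n : ℕ) : (Equiv.subLeft (wallOffset m i) * Equiv.subLeft (wallOffset m j)) ^ n =
      Equiv.addRight ((n : ZMod (2 * m)) * (wallOffset m i - wallOffset m j)) := by
    induction n with
    | zero => ext; simp
    | succ n ih => ext x; simp [pow_succ', ih]; ring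
  rw [hpow]
  by_cases hij : i = j
  · simp [hij]
  · rw [coxeterMatrix_eq_of_ne hM hij, wallOffset_eq_neg hij]
    ext x
    simp only [Equiv.coe_addRight, Equiv.Perm.coe_one, id_eq, add_eq_left]
    linear_combination (norm := (push_cast; ring)) (-wallOffset m j) * ZMod.natCast_self (2 * m)

noncomputable def reflectionPerm : W →* Equiv.Perm (ZMod (2 * m)) :=
  cs.lift ⟨_, isLiftable_subLeft_wallOffset hM⟩

theorem reflectionPerm_simple (i : Fin 2) :
    cs.reflectionPerm hM (cs.simple i) = Equiv.subLeft (wallOffset m i) :=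
  cs.lift_apply_simple _ i

/-- The chamber `w⁻¹ C`, where `C` is the chamber `0`. -/
noncomputable def chamberIndex (w : W) : ZMod (2 * m) := cs.reflectionPerm hM w⁻¹ 0

theorem chamberIndex_mul_simple (w : W) (i : Fin 2) :
    cs.chamberIndex hM (w * cs.simple i) = wallOffset m i - cs.chamberIndex hM w := by
  rw [chamberIndex, chamberIndex, mul_inv_rev, inv_simple, map_mul, Equiv.Perm.mul_apply,
    reflectionPerm_simple, Equiv.subLeft_apply]

theorem chamberIndex_alternatingWord {i j : Fin 2} (hij : i ≠ j) (n : ℕ) :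
    cs.chamberIndex hM (π (alternatingWord i j n)) = n * wallOffset m j := by
  induction n generalizing i j with
  | zero => simp [chamberIndex, alternatingWord]
  | succ n ih =>
    rw [alternatingWord_succ, wordProd_concat, chamberIndex_mul_simple, ih hij.symm,
      wallOffset_eq_neg hij]
    push_cast
    ring

theorem length_le (hm : m ≠ 0) (w : W) : ℓ w ≤ m := by
  obtain ⟨i, j, hij, hw⟩ := cs.exists_eq_wordProd_alternatingWord w
  have hMij := coxeterMatrix_eq_of_ne hM hij
  by_contra! h
  refine cs.not_isReduced_alternatingWord i j (hMij ▸ hm) (hMij ▸ h) ?_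
  rw [IsReduced, ← hw, length_alternatingWord]

theorem length_wordProd_alternatingWord {i j : Fin 2} (hij : i ≠ j) {n : ℕ} (hn : n ≤ m) :
    ℓ (π (alternatingWord i j n)) = n := by
  have hle := cs.length_wordProd_le (alternatingWord i j n)
  rw [length_alternatingWord] at hle
  obtain ⟨i', j', hij', hw⟩ :=
    cs.exists_eq_wordProd_alternatingWord (π (alternatingWord i j n))
  have h := congrArg (cs.chamberIndex hM) hw
  rw [chamberIndex_alternatingWord cs hM hij, chamberIndex_alternatingWord cs hM hij'] at h
  refine (ZMod.eq_of_natCast_eq_or_eq_neg hn (hle.trans hn) ?_).symm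
  rcases wallOffset_eq_one_or_neg_one m j with hj | hj <;>
    rcases wallOffset_eq_one_or_neg_one m j' with hj' | hj' <;>
    rw [hj, hj'] at h
  · exact .inl (by linear_combination h)
  · exact .inr (by linear_combination h)
  · exact .inr (by linear_combination -h)
  · exact .inl (by linear_combination -h)

theorem injOn_wordProd_alternatingWord :
    Set.InjOn (fun n => π (alternatingWord 1 0 n)) (range (2 * m)) := by
  intro a ha b hb h
  have h := congrArg (cs.chamberIndex hM) h
  simp only [chamberIndex_alternatingWord cs hM (by decide : (1 : Fin 2) ≠ 0)] at h
  exact ZMod.natCast_injOn_range (2 * m) ha hb (by simpa [wallOffset] using h)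

theorem wordProd_alternatingWord_zero_one {n : ℕ} (hn : n ≤ 2 * m) :
    π (alternatingWord 0 1 n) = π (alternatingWord 1 0 (2 * m - n)) := by
  rw [cs.prod_alternatingWord_eq_prod_alternatingWord_sub 0 1 n (by omega), hM, mul_comm]

theorem length_lt_length_mul_simple_one_iff (hm : m ≠ 0) (w : W) :
    ℓ w < ℓ (w * cs.simple 1) ↔ ∃ n < m, π (alternatingWord 1 0 n) = w := by
  constructor
  · intro h
    have hlast : ∀ n, ℓ w = n + 1 → w ≠ π (alternatingWord 0 1 (n + 1)) := by
      rintro n hn rfl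
      have hle := cs.length_wordProd_le (alternatingWord 1 0 n)
      rw [length_alternatingWord] at hle
      rw [alternatingWord_succ, wordProd_concat] at h hn
      rw [simple_mul_simple_cancel_right, hn] at h
      omega
    have hle := cs.length_le hM hm w
    obtain ⟨i, j, hij, hw⟩ := cs.exists_eq_wordProd_alternatingWord w
    obtain ⟨rfl, rfl⟩ | ⟨rfl, rfl⟩ : i = 0 ∧ j = 1 ∨ i = 1 ∧ j = 0 := by omega
    · obtain hℓ | ⟨n, hℓ⟩ : ℓ w = 0 ∨ ∃ n, ℓ w = n + 1 := by cases ℓ w <;> simp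
      · exact ⟨0, by omega, by simp [cs.length_eq_zero_iff.mp hℓ, alternatingWord]⟩
      · exact absurd (hℓ ▸ hw) (hlast n hℓ)
    · obtain hlt | hℓ := lt_or_eq_of_le hle
      · exact ⟨ℓ w, hlt, hw.symm⟩
      · have hbraid := cs.wordProd_alternatingWord_zero_one hM (n := m) (by omega)
        rw [show 2 * m - m = m by omega] at hbraid
        rw [hℓ, ← hbraid, ← Nat.sub_add_cancel (Nat.one_le_iff_ne_zero.mpr hm)] at hw
        exact absurd hw (hlast (m - 1) (by omega))
  · rintro ⟨n, hn, rfl⟩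
    rw [← wordProd_concat, ← alternatingWord_succ,
      cs.length_wordProd_alternatingWord hM (by decide) hn.le,
      cs.length_wordProd_alternatingWord hM (by decide) hn]
    omega

theorem exists_lt_wordProd_alternatingWord_eq (hm : m ≠ 0) (w : W) :
    ∃ n < 2 * m, π (alternatingWord 1 0 n) = w := by
  have hle := cs.length_le hM hm w
  obtain ⟨i, j, hij, hw⟩ := cs.exists_eq_wordProd_alternatingWord w
  obtain ⟨rfl, rfl⟩ | ⟨rfl, rfl⟩ : i = 0 ∧ j = 1 ∨ i = 1 ∧ j = 0 := by omega
  · obtain hℓ | hℓ := Nat.eq_zero_or_pos (ℓ w)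
    · exact ⟨0, by omega, by simp [cs.length_eq_zero_iff.mp hℓ, alternatingWord]⟩
    · rw [cs.wordProd_alternatingWord_zero_one hM (by omega)] at hw
      exact ⟨2 * m - ℓ w, by omega, hw.symm⟩
  · exact ⟨ℓ w, by omega, hw.symm⟩

variable [Fintype W]

theorem xCox_one_eq_sum (hm : m ≠ 0) :
    xCox cs {1} = ∑ n ∈ range m, of ℚ W (π (alternatingWord 1 0 n)) :=
  xCox_eq_sum_range cs ((cs.injOn_wordProd_alternatingWord hM).mono (by simp; omega))
    (by simpa using cs.length_lt_length_mul_simple_one_iff hM hm)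

theorem xCox_empty_eq_sum (hm : m ≠ 0) :
    xCox cs ∅ = ∑ n ∈ range (2 * m), of ℚ W (π (alternatingWord 1 0 n)) :=
  xCox_eq_sum_range cs (cs.injOn_wordProd_alternatingWord hM)
    (by simpa using cs.exists_lt_wordProd_alternatingWord_eq hM hm)

open scoped IsMulCommutative in
theorem xCox_one_sq {k l : ℕ} (hk : 1 ≤ k) (hl : l = 1 ∨ l = 2) (hm : m = 2 * k + l) :
    xCox cs {1} ^ 2 = (l : ℚ) • xCox cs {1} + (k : ℚ) • xCox cs ∅ := by
  have hq : (cs.simple 1 * cs.simple 0) ^ m = 1 := by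
    rw [← hM, M.symmetric]
    exact cs.simple_mul_simple_pow 1 0
  have hqt : cs.simple 1 * cs.simple 0 * cs.simple 0 =
      cs.simple 0 * (cs.simple 1 * cs.simple 0)⁻¹ := by
    simp [mul_inv_rev, inv_simple]
  set z := of ℚ W (cs.simple 1 * cs.simple 0)
  set T := of ℚ W (cs.simple 0)
  have hT : T * T = 1 := by rw [← map_mul, simple_mul_simple_self, map_one]
  have hz : z ^ (2 * k + l) = 1 := by rw [← hm, ← map_pow, hq, map_one]
  rw [sq, cs.xCox_one_eq_sum hM (by omega), cs.xCox_empty_eq_sum hM (by omega),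
    sum_range_of_wordProd_alternatingWord, sum_range_of_wordProd_alternatingWord,
    show (m + 1) / 2 = k + 1 by omega, show m / 2 = k + l - 1 by omega,
    show (2 * m + 1) / 2 = m by omega, show 2 * m / 2 = m by omega,
    add_mul_mul_add_mul_eq (geom_sum_of_mul_of hq hqt (e := k + l) (by omega))
      (geom_sum_of_mul_of hq hqt (e := k + 2) (by omega)) hT
      (Commute.sum_left _ _ _ fun i _ => Commute.sum_right _ _ _ fun j _ =>
        Commute.pow_pow_self z i j)]
  -- the identities in `z` hold in the commutative subalgebra generated by `z`
  obtain ⟨h₁, h₂⟩ := geom_sum_dihedral_identities (k := k) hl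
    (z := (⟨z, Algebra.self_mem_adjoin_singleton ℚ z⟩ : Algebra.adjoin ℚ {z}))
    (Subtype.ext (by simpa using hz))
  replace h₁ := congrArg Subtype.val h₁
  replace h₂ := congrArg Subtype.val h₂
  push_cast at h₁ h₂
  rw [h₁, h₂, ← hm]
  simp only [Nat.cast_smul_eq_nsmul, mul_add, mul_smul_comm, smul_add]
  abel

theorem xCox_empty_eq {k l : ℕ} (hk : 1 ≤ k) (hl : l = 1 ∨ l = 2) (hm : m = 2 * k + l) :
    xCox cs ∅ = (-(l : ℚ) / k) • xCox cs {1} + ((1 : ℚ) / k) • xCox cs {1} ^ 2 := by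
  have hk0 : (k : ℚ) ≠ 0 := by positivity
  rw [cs.xCox_one_sq hM hk hl hm]
  match_scalars <;> field_simp
  ring

theorem linearIndependent_one_xCox (hm : 2 ≤ m) :
    LinearIndependent ℚ ![1, xCox cs {1}, xCox cs ∅] := by
  rw [Fintype.linearIndependent_iff]
  intro g hg
  have hcoeff (w : W) := congrArg (fun f => f.coeff w) hg
  have h1 : cs.simple 1 ≠ 1 := fun h => by simpa [h] using cs.length_simple 1
  have h0 : cs.simple 0 ≠ 1 := fun h => by simpa [h] using cs.length_simple 0
  have h0X : cs.length (cs.simple 0) < cs.length (cs.simple 0 * cs.simple 1) :=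
    (cs.length_lt_length_mul_simple_one_iff hM (by omega) _).mpr
      ⟨1, by omega, by simp [alternatingWord]⟩
  rw [length_simple] at h0X
  have e₁ := hcoeff (cs.simple 1)
  have e₀ := hcoeff (cs.simple 0)
  have e := hcoeff 1
  simp [Fin.sum_univ_three, xCox_coeff, one_def, h1, h0, h0X] at e₁ e₀ e
  intro i
  fin_cases i <;> simp <;> linarith

theorem exists_basis_adjoin_xCox_one {k l : ℕ} (hk : 1 ≤ k) (hl : l = 1 ∨ l = 2)
    (hm : m = 2 * k + l) :
    ∃ b : Module.Basis (Fin 3) ℚ (Algebra.adjoin ℚ {xCox cs {1}}),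
      ∀ i, (b i : MonoidAlgebra ℚ W) = ![1, xCox cs {1}, xCox cs ∅] i := by
  have hx := Algebra.self_mem_adjoin_singleton ℚ (xCox cs {1})
  have hspan (i : Fin 3) : ![1, xCox cs {1}, xCox cs ∅] i ∈
      Submodule.span ℚ (Set.range ![1, xCox cs {1}, xCox cs ∅]) :=
    Submodule.subset_span ⟨i, rfl⟩
  refine Algebra.exists_basis_adjoin_singleton (cs.linearIndependent_one_xCox hM (by omega))
    (fun i => ?_) (hspan 0) (fun i => ?_) <;> fin_cases i
  · exact one_mem _
  · exact hx
  · show xCox cs ∅ ∈ _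
    rw [cs.xCox_empty_eq hM hk hl hm]
    exact add_mem (Subalgebra.smul_mem _ hx _) (Subalgebra.smul_mem _ (pow_mem hx 2) _)
  · simpa using hspan 1
  · show xCox cs {1} * xCox cs {1} ∈ _
    rw [← sq, cs.xCox_one_sq hM hk hl hm]
    exact add_mem (Submodule.smul_mem _ _ (hspan 1)) (Submodule.smul_mem _ _ (hspan 2))
  · show xCox cs {1} * xCox cs ∅ ∈ _
    rw [xCox_mul_xCox_empty]
    exact Submodule.smul_mem _ _ (hspan 2)

end CoxeterSystem

/-- Let `m = 2k + l` with `k ≥ 1` and `l ∈ {1, 2}`, and let `W` be the dihedral Coxeter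
group `I₂(m)` with simple reflections `s₁ = simple 0`, `s₂ = simple 1`.  With `x_J` the
sum of the minimal-length coset representatives of `⟨s₂⟩` (so `J = {1}`) and `x_∅` the
sum of all elements of `W`:  `x_J² = l·x_J + k·x_∅`; consequently
`x_∅ = (-l/k)·x_J + (1/k)·x_J²` lies in `ℚ[x_J]`, and `{1, x_J, x_∅}` is a basis of
`ℚ[x_J]` contained in the standard descent algebra basis. -/
theorem dihedral_native_basis {W : Type*} [Group W] [Fintype W]
    (m k l : ℕ) (hk : 1 ≤ k) (hl : l = 1 ∨ l = 2) (hm : m = 2 * k + l)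
    (M : CoxeterMatrix (Fin 2)) (hM : M 0 1 = m)
    (cs : CoxeterSystem M W) :
    xCox cs {1} ^ 2 = (l : ℚ) • xCox cs {1} + (k : ℚ) • xCox cs ∅ ∧
    xCox cs ∅ = (-(l : ℚ) / k) • xCox cs {1} + ((1 : ℚ) / k) • xCox cs {1} ^ 2 ∧
    ∃ b : Module.Basis (Fin 3) ℚ (Algebra.adjoin ℚ {xCox cs {1}}),
      ((b 0 : Algebra.adjoin ℚ {xCox cs {1}}) : MonoidAlgebra ℚ W) = 1 ∧
      ((b 1 : Algebra.adjoin ℚ {xCox cs {1}}) : MonoidAlgebra ℚ W) = xCox cs {1} ∧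
      ((b 2 : Algebra.adjoin ℚ {xCox cs {1}}) : MonoidAlgebra ℚ W) = xCox cs ∅ := by
  obtain ⟨b, hb⟩ := cs.exists_basis_adjoin_xCox_one hM hk hl hm
  exact ⟨cs.xCox_one_sq hM hk hl hm, cs.xCox_empty_eq hM hk hl hm, b, hb 0, hb 1, hb 2⟩
end
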